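/- Let G be a twin-free graph of the form H + K_1, where H has at least one edge. Then for every t ≥ 1, det(μ_t(G)) = det(G) + t − 1. -/

import Mathlib

/-!
In `μ_t(H + K₁)` the copies of the added vertex on the levels below `t` are `t` isolated
vertices, hence pairwise twins: a determining set must contain all but one of them, and all but
one suffice. Everything else is rigid. The top copy of the added vertex is the only vertex with
exactly one neighbour, so the root is fixed; then every level of `H` is preserved, an automorphism
acts on level `0` as an automorphism of `H + K₁`, and twin-freeness of `H` propagates pointwise
fixing from each level to the next. So determining sets of `μ_t(H + K₁)` are, up to these `t - 1`
isolated vertices, determining sets of `H + K₁` placed on level `0`.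
-/

open SimpleGraph

/-- The generalized Mycielskian `μ_t(G)`: vertices are `some (s, i)` for levels
`0 ≤ s ≤ t` (level `0` being the original vertices) plus a root `none`. -/
def Mycielskian {V : Type*} (G : SimpleGraph V) (t : ℕ) :
    SimpleGraph (Option (Fin (t + 1) × V)) where
  Adj x y :=
    match x, y with
    | none, none => False
    | none, some (s, _) => s.val = t
    | some (s, _), none => s.val = t
    | some (s, i), some (r, j) =>
        G.Adj i j ∧ ((s.val = 0 ∧ r.val = 0) ∨ s.val + 1 = r.val ∨ r.val + 1 = s.val)
  symm := by
    constructor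
    rintro (_ | ⟨s, i⟩) (_ | ⟨r, j⟩) h
    · exact h
    · exact h
    · exact h
    · exact ⟨h.1.symm, by tauto⟩
  loopless := by
    constructor
    rintro (_ | ⟨s, i⟩) h
    · exact h
    · exact G.irrefl h.1

/-- `S` is a determining set for `G`: the only automorphism fixing `S` pointwise
is the identity. -/
def IsDetermining {V : Type*} (G : SimpleGraph V) (S : Set V) : Prop :=
  ∀ φ : G ≃g G, (∀ v ∈ S, φ v = v) → ∀ v, φ v = v

/-- The determining number of `G`. -/
noncomputable def detNum {V : Type*} (G : SimpleGraph V) : ℕ :=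
  sInf {n | ∃ S : Finset V, S.card = n ∧ IsDetermining G ↑S}

/-- A coloring is distinguishing if no nontrivial automorphism preserves all
color classes. -/
def IsDistinguishing {V : Type*} (G : SimpleGraph V) {C : Type*} (c : V → C) : Prop :=
  ∀ φ : G ≃g G, (∀ v, c (φ v) = c v) → ∀ v, φ v = v

/-- The distinguishing number of `G`. -/
noncomputable def distNum {V : Type*} (G : SimpleGraph V) : ℕ :=
  sInf {d | ∃ c : V → Fin d, IsDistinguishing G c}

/-- The cost of 2-distinguishing: the minimum size of a color class over all
2-distinguishing colorings. -/
noncomputable def cost2 {V : Type*} (G : SimpleGraph V) [Fintype V] : ℕ :=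
  sInf {n | ∃ c : V → Bool, IsDistinguishing G c ∧
    n = (Finset.univ.filter fun v => c v = true).card}

/-- The twin equivalence relation: equal open neighborhoods. -/
def twinSetoid {V : Type*} (G : SimpleGraph V) : Setoid V where
  r x y := G.neighborSet x = G.neighborSet y
  iseqv := ⟨fun _ => rfl, Eq.symm, Eq.trans⟩

/-- The twin quotient graph `G̃`. -/
def twinQuotient {V : Type*} (G : SimpleGraph V) :
    SimpleGraph (Quotient (twinSetoid G)) where
  Adj a b := ∃ p q : V, Quotient.mk (twinSetoid G) p = a ∧
    Quotient.mk (twinSetoid G) q = b ∧ G.Adj p q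
  symm := by constructor; rintro a b ⟨p, q, hp, hq, h⟩; exact ⟨q, p, hq, hp, h.symm⟩
  loopless := by
    constructor
    rintro a ⟨p, q, rfl, hq, h⟩
    have htw : G.neighborSet q = G.neighborSet p := Quotient.exact hq
    have hmem : q ∈ G.neighborSet p := h
    rw [← htw] at hmem
    exact G.irrefl hmem

/-- A twin cover: contains at least one of every pair of distinct twins. -/
def IsTwinCover {V : Type*} (G : SimpleGraph V) (T : Set V) : Prop :=
  ∀ x y : V, x ≠ y → G.neighborSet x = G.neighborSet y → x ∈ T ∨ y ∈ T

/-- A minimum twin cover. -/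
def IsMinTwinCover {V : Type*} (G : SimpleGraph V) (T : Set V) : Prop :=
  IsTwinCover G T ∧ ∀ T' : Set V, IsTwinCover G T' → T.ncard ≤ T'.ncard

/-- Attach `ℓ` pendant vertices to the vertex `w` of `G`. -/
def attachPendants {V : Type*} (G : SimpleGraph V) (w : V) (ℓ : ℕ) :
    SimpleGraph (V ⊕ Fin ℓ) where
  Adj x y :=
    match x, y with
    | Sum.inl a, Sum.inl b => G.Adj a b
    | Sum.inl a, Sum.inr _ => a = w
    | Sum.inr _, Sum.inl b => b = w
    | Sum.inr _, Sum.inr _ => False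
  symm := by constructor; rintro (a | a) (b | b) h <;> simp_all <;> exact h.symm
  loopless := by constructor; rintro (a | a) h <;> simp_all

section

variable {W : Type*} {G : SimpleGraph W}

namespace SimpleGraph

theorem Iso.isIsolated_apply_iff {W' : Type*} {G' : SimpleGraph W'} (φ : G ≃g G') {v : W} :
    G'.IsIsolated (φ v) ↔ G.IsIsolated v := by
  rw [← neighborSet_eq_empty, ← neighborSet_eq_empty, ← φ.image_neighborSet,
    Set.image_eq_empty]

def Iso.swapOfNeighborSetEq [DecidableEq W] {x y : W} (h : G.neighborSet x = G.neighborSet y) :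
    G ≃g G where
  toEquiv := Equiv.swap x y
  map_rel_iff' {a b} := by
    have htwin : ∀ c, G.Adj x c ↔ G.Adj y c := fun c => Set.ext_iff.mp h c
    have hx := G.irrefl (v := x)
    have hy := G.irrefl (v := y)
    simp only [Equiv.swap_apply_def]
    grind [G.adj_comm]

def IsTwinFree (G : SimpleGraph W) : Prop :=
  ∀ x y, G.neighborSet x = G.neighborSet y → x = y

namespace IsTwinFree

theorem eq_of_isIsolated (hG : G.IsTwinFree) {x y : W} (hx : G.IsIsolated x)
    (hy : G.IsIsolated y) : x = y :=
  hG x y (by rw [hx.neighborSet_eq_empty, hy.neighborSet_eq_empty])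

theorem iso_apply_eq_self (hG : G.IsTwinFree) (φ : G ≃g G) {x : W} (hx : G.IsIsolated x) :
    φ x = x :=
  hG.eq_of_isIsolated (φ.isIsolated_apply_iff.mpr hx) hx

theorem sum_left {W' : Type*} {G' : SimpleGraph W'} (hG : (G ⊕g G').IsTwinFree) :
    G.IsTwinFree := by
  intro x y hxy
  have : (G ⊕g G').neighborSet (.inl x) = (G ⊕g G').neighborSet (.inl y) := by
    ext (c | c)
    · simpa using Set.ext_iff.mp hxy c
    · simp
  simpa using hG _ _ this

end IsTwinFree

end SimpleGraph

theorem IsDetermining.isTwinCover {S : Set W} (hS : IsDetermining G S) : IsTwinCover G S := by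
  classical
  intro x y hxy htwin
  by_contra! hxyS
  have hfix : ∀ v ∈ S, Iso.swapOfNeighborSetEq htwin v = v := fun v hv =>
    Equiv.swap_apply_of_ne_of_ne (by rintro rfl; exact hxyS.1 hv) (by rintro rfl; exact hxyS.2 hv)
  exact hxy (by simpa [Iso.swapOfNeighborSetEq] using (hS _ hfix x).symm)

theorem IsTwinCover.card_sdiff_le_one [DecidableEq W] {S I : Finset W} (hS : IsTwinCover G S)
    (hI : ∀ x ∈ I, ∀ y ∈ I, G.neighborSet x = G.neighborSet y) : (I \ S).card ≤ 1 := by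
  rw [Finset.card_le_one]
  intro x hx y hy
  simp only [Finset.mem_sdiff] at hx hy
  by_contra hxy
  rcases hS x y hxy (hI x hx.1 y hy.1) with h | h
  exacts [hx.2 h, hy.2 h]

theorem IsDetermining.of_subset_union {S T F : Set W} (hS : IsDetermining G S) (hST : S ⊆ T ∪ F)
    (hF : ∀ φ : G ≃g G, ∀ v ∈ F, φ v = v) : IsDetermining G T := fun φ hT =>
  hS φ fun v hv => (hST hv).elim (hT v) (hF φ v)

theorem detNum_le_card {S : Finset W} (hS : IsDetermining G S) : detNum G ≤ S.card :=
  Nat.sInf_le ⟨S, rfl, hS⟩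

theorem exists_isDetermining_card_eq_detNum [Finite W] :
    ∃ S : Finset W, S.card = detNum G ∧ IsDetermining G S := by
  have := Fintype.ofFinite W
  exact Nat.sInf_mem (s := {n | ∃ S : Finset W, S.card = n ∧ IsDetermining G S})
    ⟨_, Finset.univ, rfl, fun φ h v => h v (Finset.mem_univ v)⟩

theorem Function.Injective.eq_self_of_mapsTo {α : Type*} {f : α → α} (hf : f.Injective)
    {I : Set α} (hI : Set.MapsTo f I I) {x : α} (hfix : ∀ y ∈ I, y ≠ x → f y = y) :
    ∀ y ∈ I, f y = y := by
  intro y hy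
  by_contra hne
  have hyx : y = x := by_contra fun h => hne (hfix y hy h)
  exact hne (hf (hfix _ (hI hy) fun h => hne (h.trans hyx.symm)))

namespace Mycielskian

variable {t : ℕ}

@[simp]
theorem adj_some_some {s r : Fin (t + 1)} {i j : W} :
    (Mycielskian G t).Adj (some (s, i)) (some (r, j)) ↔
      G.Adj i j ∧ ((s.val = 0 ∧ r.val = 0) ∨ s.val + 1 = r.val ∨ r.val + 1 = s.val) :=
  Iff.rfl

@[simp]
theorem adj_none_some {s : Fin (t + 1)} {i : W} :
    (Mycielskian G t).Adj none (some (s, i)) ↔ s = Fin.last t :=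
  (Fin.ext_iff (a := s) (b := Fin.last t)).symm

@[simp]
theorem adj_some_none {s : Fin (t + 1)} {i : W} :
    (Mycielskian G t).Adj (some (s, i)) none ↔ s = Fin.last t :=
  (Fin.ext_iff (a := s) (b := Fin.last t)).symm

@[simp]
theorem not_adj_none_none : ¬ (Mycielskian G t).Adj none none := id

def _root_.SimpleGraph.Iso.mycielskian {W' : Type*} {G' : SimpleGraph W'} (ψ : G ≃g G') :
    Mycielskian G t ≃g Mycielskian G' t where
  toEquiv := Equiv.optionCongr ((Equiv.refl _).prodCongr ψ.toEquiv)
  map_rel_iff' {a b} := by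
    rcases a with _ | ⟨s, i⟩ <;> rcases b with _ | ⟨r, j⟩
    · exact Iff.rfl
    · exact Iff.rfl
    · exact Iff.rfl
    · exact and_congr ψ.map_adj_iff Iff.rfl

@[simp]
theorem _root_.SimpleGraph.Iso.mycielskian_apply_some {W' : Type*} {G' : SimpleGraph W'}
    (ψ : G ≃g G') (s : Fin (t + 1)) (v : W) :
    ψ.mycielskian (t := t) (some (s, v)) = some (s, ψ v) := rfl

theorem adj_zero_zero {i j : W} :
    (Mycielskian G t).Adj (some (0, i)) (some (0, j)) ↔ G.Adj i j := by
  simp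

theorem adj_castSucc_succ {s : Fin t} {i j : W} :
    (Mycielskian G t).Adj (some (s.castSucc, i)) (some (s.succ, j)) ↔ G.Adj i j := by
  simp

theorem isDetermining_proj_of_isDetermining {S : Set (Option (Fin (t + 1) × W))}
    (hS : IsDetermining (Mycielskian G t) S) : IsDetermining G {v | ∃ s, some (s, v) ∈ S} := by
  intro ψ hψ v
  have hfix : ∀ z ∈ S, ψ.mycielskian z = z := by
    rintro (_ | ⟨s, w⟩) hz
    · rfl
    · simp [hψ w ⟨s, hz⟩]
  simpa using hS _ hfix (some (0, v))

theorem isIsolated_some_iff {s : Fin (t + 1)} {v : W} :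
    (Mycielskian G t).IsIsolated (some (s, v)) ↔ G.IsIsolated v ∧ s ≠ Fin.last t := by
  constructor
  · intro h
    refine ⟨fun w hvw => ?_, fun hs => h none (adj_some_none.mpr hs)⟩
    rcases Fin.eq_castSucc_or_eq_last s with ⟨s, rfl⟩ | rfl
    · exact h (some (s.succ, w)) ⟨hvw, Or.inr (Or.inl rfl)⟩
    · exact h none (adj_some_none.mpr rfl)
  · rintro ⟨hv, hs⟩ (_ | ⟨r, w⟩) hadj
    · exact hs (adj_some_none.mp hadj)
    · exact hv w hadj.1

theorem not_isIsolated_none [Nonempty W] : ¬ (Mycielskian G t).IsIsolated none := fun h =>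
  h (some (Fin.last t, Classical.arbitrary W)) (adj_none_some.mpr rfl)

theorem neighborSet_last_of_isIsolated {v : W} (hv : G.IsIsolated v) :
    (Mycielskian G t).neighborSet (some (Fin.last t, v)) = {none} := by
  ext (_ | ⟨r, w⟩)
  · simp [mem_neighborSet]
  · simp only [mem_neighborSet, adj_some_some, Set.mem_singleton_iff, reduceCtorEq, iff_false]
    exact fun h => hv w h.1

theorem not_subsingleton_neighborSet_none [Nontrivial W] :
    ¬ ((Mycielskian G t).neighborSet none).Subsingleton := by
  obtain ⟨a, b, hab⟩ := exists_pair_ne W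
  intro h
  have ha : some (Fin.last t, a) ∈ (Mycielskian G t).neighborSet none := by simp
  have hb : some (Fin.last t, b) ∈ (Mycielskian G t).neighborSet none := by simp
  simpa [hab] using h ha hb

theorem not_subsingleton_neighborSet_some (ht : 1 ≤ t) {v w : W} (hvw : G.Adj v w)
    (s : Fin (t + 1)) : ¬ ((Mycielskian G t).neighborSet (some (s, v))).Subsingleton := by
  intro h
  rcases Fin.eq_castSucc_or_eq_last s with ⟨s, rfl⟩ | rfl
  · have hup : some (s.succ, w) ∈ (Mycielskian G t).neighborSet (some (s.castSucc, v)) :=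
      ⟨hvw, Or.inr (Or.inl rfl)⟩
    -- for `s = 0` the truncated `s - 1` is `0`, reached by an edge inside level `0`
    have hdown :
        some (⟨s - 1, by omega⟩, w) ∈ (Mycielskian G t).neighborSet (some (s.castSucc, v)) :=
      ⟨hvw, by simp only [Fin.val_castSucc]; omega⟩
    have := h hup hdown
    simp [Fin.ext_iff] at this
    omega
  · have hroot : none ∈ (Mycielskian G t).neighborSet (some (Fin.last t, v)) := by simp
    have hdown :
        some (⟨t - 1, by omega⟩, w) ∈ (Mycielskian G t).neighborSet (some (Fin.last t, v)) :=
      ⟨hvw, by simp only [Fin.val_last]; omega⟩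
    simpa using h hroot hdown

end Mycielskian

end

section AddedIsolatedVertex

variable {V : Type*} {H : SimpleGraph V} {t : ℕ}

local notation "H₊" => H ⊕g (⊥ : SimpleGraph Unit)

theorem isIsolated_sum_bot_inr : (H₊).IsIsolated (.inr ()) := by
  rintro (_ | _) <;> simp

theorem SimpleGraph.IsTwinFree.exists_adj_of_sum_bot (htf : (H₊).IsTwinFree) (v : V) :
    ∃ w, H.Adj v w := by
  by_contra! h
  have : (H₊).IsIsolated (.inl v) := by rintro (w | _) <;> simp [h]
  simpa using htf.eq_of_isIsolated this isIsolated_sum_bot_inr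

namespace Mycielskian

variable (V t) in
def isolatedCopies : Finset (Option (Fin (t + 1) × (V ⊕ Unit))) :=
  Finset.univ.map ⟨fun s : Fin t => some (s.castSucc, .inr ()), fun a b h => by simpa using h⟩

theorem card_isolatedCopies : (isolatedCopies V t).card = t := by
  simp [isolatedCopies]

theorem mem_isolatedCopies {z : Option (Fin (t + 1) × (V ⊕ Unit))} :
    z ∈ isolatedCopies V t ↔ ∃ s : Fin t, some (s.castSucc, .inr ()) = z := by
  simp only [isolatedCopies, Finset.mem_map, Finset.mem_univ, true_and]
  rfl

theorem isIsolated_iff_mem_isolatedCopies (htf : (H₊).IsTwinFree)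
    {z : Option (Fin (t + 1) × (V ⊕ Unit))} :
    (Mycielskian H₊ t).IsIsolated z ↔ z ∈ isolatedCopies V t := by
  rw [mem_isolatedCopies]
  rcases z with _ | ⟨s, v | u⟩
  · simpa using not_isIsolated_none
  · obtain ⟨w, hw⟩ := htf.exists_adj_of_sum_bot v
    have : ¬ (H₊).IsIsolated (.inl v) := fun h => h (.inl w) (by simpa)
    simp [isIsolated_some_iff, this]
  · cases u
    simp [isIsolated_some_iff, isIsolated_sum_bot_inr, Fin.exists_castSucc_eq]

theorem eq_pendant_of_neighborSet_eq_singleton [Nonempty V] (htf : (H₊).IsTwinFree) (ht : 1 ≤ t)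
    {x y : Option (Fin (t + 1) × (V ⊕ Unit))} (h : (Mycielskian H₊ t).neighborSet x = {y}) :
    x = some (Fin.last t, .inr ()) := by
  have hsub : ((Mycielskian H₊ t).neighborSet x).Subsingleton := h ▸ Set.subsingleton_singleton
  rcases x with _ | ⟨s, v | u⟩
  · have := nontrivial_of_ne (Sum.inl (Classical.arbitrary V)) (Sum.inr ()) Sum.inl_ne_inr
    exact absurd hsub not_subsingleton_neighborSet_none
  · obtain ⟨w, hw⟩ := htf.exists_adj_of_sum_bot v
    exact absurd hsub (not_subsingleton_neighborSet_some ht (sum_adj_inl.mpr hw) s)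
  · cases u
    by_contra hs
    have hiso : (Mycielskian H₊ t).IsIsolated (some (s, .inr ())) :=
      isIsolated_some_iff.mpr ⟨isIsolated_sum_bot_inr, by simpa using hs⟩
    simp [hiso.neighborSet_eq_empty] at h

theorem apply_pendant_and_root [Nonempty V] (htf : (H₊).IsTwinFree) (ht : 1 ≤ t)
    (φ : Mycielskian H₊ t ≃g Mycielskian H₊ t) :
    φ (some (Fin.last t, .inr ())) = some (Fin.last t, .inr ()) ∧ φ none = none := by
  have hp := neighborSet_last_of_isIsolated (t := t) (isIsolated_sum_bot_inr (H := H))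
  have himage : (Mycielskian H₊ t).neighborSet (φ (some (Fin.last t, .inr ()))) = {φ none} := by
    rw [← φ.image_neighborSet, hp, Set.image_singleton]
  have hφp := eq_pendant_of_neighborSet_eq_singleton htf ht himage
  rw [hφp, hp, Set.singleton_eq_singleton_iff] at himage
  exact ⟨hφp, himage.symm⟩

theorem exists_apply_some_last_inl [Nonempty V] (htf : (H₊).IsTwinFree) (ht : 1 ≤ t)
    (φ : Mycielskian H₊ t ≃g Mycielskian H₊ t) (w : V) :
    ∃ w', φ (some (Fin.last t, .inl w)) = some (Fin.last t, .inl w') := by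
  obtain ⟨hp, hn⟩ := apply_pendant_and_root htf ht φ
  have hadj : (Mycielskian H₊ t).Adj (φ (some (Fin.last t, .inl w))) none := by
    rw [← hn, φ.map_adj_iff]
    simp
  rcases h : φ (some (Fin.last t, .inl w)) with _ | ⟨r, j | u⟩ <;> rw [h] at hadj
  · exact absurd hadj not_adj_none_none
  · exact ⟨j, by rw [adj_some_none.mp hadj]⟩
  · cases u
    rw [adj_some_none.mp hadj, ← hp] at h
    simpa using φ.injective h

/-- Downwards from the top level: a vertex on level `s` is adjacent to one on level `s + 1`, so its
image lies on level `s` or `s + 2`, and the second case is excluded by level `s + 2` for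
`φ.symm`. -/
theorem exists_apply_some_inl [Nonempty V] (htf : (H₊).IsTwinFree) (ht : 1 ≤ t)
    (φ : Mycielskian H₊ t ≃g Mycielskian H₊ t) (s : Fin (t + 1)) (w : V) :
    ∃ w', φ (some (s, .inl w)) = some (s, .inl w') := by
  suffices h : ∀ n, ∀ φ : Mycielskian H₊ t ≃g Mycielskian H₊ t, ∀ s : Fin (t + 1),
      t ≤ s + n → ∀ w, ∃ w', φ (some (s, .inl w)) = some (s, .inl w') from
    h t φ s (by omega) w
  intro n
  induction n with
  | zero =>
    intro φ s hs w
    obtain rfl : s = Fin.last t := Fin.ext (by simp; omega)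
    exact exists_apply_some_last_inl htf ht φ w
  | succ n ih =>
    intro φ s hs w
    by_cases hsn : t ≤ s + n
    · exact ih φ s hsn w
    obtain ⟨w₁, hw₁⟩ := htf.exists_adj_of_sum_bot w
    obtain ⟨w₂, hw₂⟩ := ih φ ⟨s + 1, by omega⟩ (by simp; omega) w₁
    have hadj : (Mycielskian H₊ t).Adj (φ (some (s, .inl w)))
        (some (⟨s + 1, by omega⟩, .inl w₂)) := by
      rw [← hw₂, φ.map_adj_iff]
      simpa using hw₁
    have hn := (apply_pendant_and_root htf ht φ).2
    rcases h : φ (some (s, .inl w)) with _ | ⟨r, j | u⟩ <;> rw [h] at hadj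
    · rw [← hn] at h
      simpa using φ.injective h
    · rcases hadj.2 with ⟨-, h0⟩ | hr | hr
      · simp at h0
      · obtain rfl : r = s := Fin.ext (by simp at hr; omega)
        exact ⟨j, rfl⟩
      · obtain ⟨j', hj'⟩ := ih φ.symm r (by simp at hr; omega) j
        rw [← h, RelIso.symm_apply_apply] at hj'
        simp only [Option.some.injEq, Prod.mk.injEq] at hj'
        simp only [hj'.1] at hr
        omega
    · simpa using hadj.1

theorem exists_iso_apply_some_zero_inl [Nonempty V] (htf : (H₊).IsTwinFree) (ht : 1 ≤ t)
    (φ : Mycielskian H₊ t ≃g Mycielskian H₊ t) :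
    ∃ ψ : H ≃g H, ∀ w, φ (some (0, .inl w)) = some (0, .inl (ψ w)) := by
  choose f hf using exists_apply_some_inl htf ht φ 0
  choose g hg using exists_apply_some_inl htf ht φ.symm 0
  have hfg : ∀ w, f (g w) = w := fun w => by
    have := φ.apply_symm_apply (some (0, .inl w))
    rw [hg, hf] at this
    simpa using this
  have hgf : ∀ w, g (f w) = w := fun w => by
    have := φ.symm_apply_apply (some (0, .inl w))
    rw [hf, hg] at this
    simpa using this
  refine ⟨⟨⟨f, g, hgf, hfg⟩, fun {a b} => ?_⟩, hf⟩
  simpa [hf, adj_zero_zero] using φ.map_adj_iff (v := some (0, .inl a)) (w := some (0, .inl b))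

theorem apply_some_inl_eq_self [Nonempty V] (htf : (H₊).IsTwinFree) (ht : 1 ≤ t)
    (φ : Mycielskian H₊ t ≃g Mycielskian H₊ t)
    (h0 : ∀ w, φ (some (0, .inl w)) = some (0, .inl w)) (s : Fin (t + 1)) (w : V) :
    φ (some (s, .inl w)) = some (s, .inl w) := by
  induction s using Fin.induction generalizing w with
  | zero => exact h0 w
  | succ s ih =>
    obtain ⟨w', hw'⟩ := exists_apply_some_inl htf ht φ s.succ w
    suffices H.neighborSet w = H.neighborSet w' by rw [hw', htf.sum_left w w' this]
    ext v
    simpa [hw', ih, adj_castSucc_succ, adj_comm] using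
      (φ.map_adj_iff (v := some (s.castSucc, .inl v)) (w := some (s.succ, .inl w))).symm

theorem isDetermining_image_zero_union_erase [DecidableEq V] [Nonempty V]
    (htf : (H₊).IsTwinFree) (ht : 1 ≤ t) {S₀ : Finset (V ⊕ Unit)}
    (hS₀ : IsDetermining H₊ S₀)
    (x₀ : Option (Fin (t + 1) × (V ⊕ Unit))) :
    IsDetermining (Mycielskian H₊ t)
      ↑(S₀.image (fun v => some (0, v)) ∪ (isolatedCopies V t).erase x₀) := by
  intro φ hφ
  obtain ⟨hp, hn⟩ := apply_pendant_and_root htf ht φ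
  obtain ⟨ψ, hψ⟩ := exists_iso_apply_some_zero_inl htf ht φ
  have hψ_id : ∀ w, ψ w = w := by
    have hfix : ∀ v ∈ (S₀ : Set (V ⊕ Unit)), (ψ.sumCongr (Iso.refl (G := ⊥))) v = v := by
      rintro (w | u) hw
      · have := hφ (some (0, .inl w)) (by simpa using Or.inl hw)
        simpa [hψ] using this
      · rfl
    simpa using fun w => hS₀ _ hfix (.inl w)
  have hinl := apply_some_inl_eq_self htf ht φ fun w => by rw [hψ, hψ_id]
  have hiso : ∀ z ∈ {z | (Mycielskian H₊ t).IsIsolated z}, φ z = z :=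
    φ.injective.eq_self_of_mapsTo (fun z hz => φ.isIsolated_apply_iff.mpr hz) (x := x₀)
      fun z hz hne => hφ z <| by
        simpa [hne] using Or.inr ((isIsolated_iff_mem_isolatedCopies htf).mp hz)
  rintro (_ | ⟨s, w | u⟩)
  · exact hn
  · exact hinl s w
  · cases u
    by_cases hs : s = Fin.last t
    · rw [hs, hp]
    · exact hiso _ (isIsolated_some_iff.mpr ⟨isIsolated_sum_bot_inr, hs⟩)

theorem isDetermining_image_sdiff_isolatedCopies [DecidableEq V] (htf : (H₊).IsTwinFree)
    {S : Finset (Option (Fin (t + 1) × (V ⊕ Unit)))}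
    (hS : IsDetermining (Mycielskian H₊ t) S) :
    IsDetermining H₊ ↑((S \ isolatedCopies V t).image fun z => z.elim (.inr ()) Prod.snd) := by
  refine (isDetermining_proj_of_isDetermining hS).of_subset_union (F := {.inr ()}) ?_
    fun φ v hv => hv ▸ htf.iso_apply_eq_self φ isIsolated_sum_bot_inr
  rintro (w | u) ⟨s, hs⟩
  · refine Or.inl (Finset.mem_image.mpr ⟨some (s, .inl w), ?_, rfl⟩)
    simpa [mem_isolatedCopies] using hs
  · exact Or.inr rfl

theorem detNum_le [Finite V] [Nonempty V] (htf : (H₊).IsTwinFree) (ht : 1 ≤ t) :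
    detNum (Mycielskian H₊ t) ≤ detNum H₊ + (t - 1) := by
  classical
  obtain ⟨S₀, hS₀card, hS₀⟩ := exists_isDetermining_card_eq_detNum (G := H₊)
  obtain ⟨x₀, hx₀⟩ : (isolatedCopies V t).Nonempty := by
    rw [← Finset.card_pos, card_isolatedCopies]
    omega
  calc detNum (Mycielskian H₊ t)
      ≤ (S₀.image (fun v => some (0, v)) ∪ (isolatedCopies V t).erase x₀).card :=
        detNum_le_card (isDetermining_image_zero_union_erase htf ht hS₀ x₀)
    _ ≤ (S₀.image (fun v => some (0, v))).card + ((isolatedCopies V t).erase x₀).card :=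
        Finset.card_union_le _ _
    _ ≤ detNum H₊ + (t - 1) := by
        rw [Finset.card_erase_of_mem hx₀, card_isolatedCopies, ← hS₀card]
        exact Nat.add_le_add_right Finset.card_image_le _

theorem le_detNum [Finite V] (htf : (H₊).IsTwinFree) :
    detNum H₊ + (t - 1) ≤ detNum (Mycielskian H₊ t) := by
  classical
  obtain ⟨S, hScard, hS⟩ := exists_isDetermining_card_eq_detNum (G := Mycielskian H₊ t)
  have hproj := (detNum_le_card (isDetermining_image_sdiff_isolatedCopies htf hS)).trans
    Finset.card_image_le
  have hmiss : (isolatedCopies V t \ S).card ≤ 1 :=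
    hS.isTwinCover.card_sdiff_le_one fun x hx y hy => by
      rw [((isIsolated_iff_mem_isolatedCopies htf).mpr hx).neighborSet_eq_empty,
        ((isIsolated_iff_mem_isolatedCopies htf).mpr hy).neighborSet_eq_empty]
  have hsplitI := Finset.card_sdiff_add_card_inter (isolatedCopies V t) S
  have hsplitS := Finset.card_sdiff_add_card_inter S (isolatedCopies V t)
  rw [card_isolatedCopies, Finset.inter_comm] at hsplitI
  omega

end Mycielskian

end AddedIsolatedVertex

/-- for twin-free `G = H + K_1` with `H` having an edge,
`det(μ_t(G)) = det(G) + t − 1`. -/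
theorem det_mycielskian_twinfree_iso {V : Type*} [Fintype V] (H : SimpleGraph V)
    (hedge : ∃ a b : V, H.Adj a b)
    (htf : ∀ x y : V ⊕ Unit,
      (H ⊕g (⊥ : SimpleGraph Unit)).neighborSet x =
        (H ⊕g (⊥ : SimpleGraph Unit)).neighborSet y → x = y)
    (t : ℕ) (ht : 1 ≤ t) :
    detNum (Mycielskian (H ⊕g (⊥ : SimpleGraph Unit)) t) =
      detNum (H ⊕g (⊥ : SimpleGraph Unit)) + t - 1 := by
  obtain ⟨a, -, -⟩ := hedge
  have : Nonempty V := ⟨a⟩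
  have := Mycielskian.detNum_le htf ht
  have := Mycielskian.le_detNum (t := t) htf
  omega
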